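/- Let (X_i) be a Markov chain on a finite state space with transition matrix P. For a state b let N_t(b) := |{0 ≤ i ≤ t : X_i = b}| be the number of visits to b up to time t, and let T_b := inf{t ≥ 0 : X_t = b}. Then for all states a, b and all t, s ∈ ℕ: E_a[N_t(b)]/E_b[N_t(b)] ≤ Pr_a[T_b ≤ t] ≤ E_a[N_{t+s}(b)]/E_b[N_s(b)]; equivalently, (Σ_{i=0}^t P^i(a,b))/(Σ_{i=0}^t P^i(b,b)) ≤ Pr_a[T_b ≤ t] ≤ (Σ_{i=0}^{t+s} P^i(a,b))/(Σ_{i=0}^s P^i(b,b)). -/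

import Mathlib

open MeasureTheory Filter
open scoped ENNReal NNReal

noncomputable section

namespace FrogWork

/-! ### The underlying probability space

All the randomness used by the particle systems below is extracted from a single sample
`ω` drawn uniformly from `[0,1)`, via its binary digits: the digits of a uniform sample are
i.i.d. fair bits, and regrouping them along the pairing function `Nat.pair` produces a
countable family of i.i.d. uniform-`[0,1]` random variables `unif i`. -/

/-- The base probability space: the uniform measure on `[0,1)`. -/
def μ : Measure ℝ := MeasureTheory.volume.restrict (Set.Ico (0:ℝ) 1)

/-- The `k`-th binary digit of `ω ∈ [0,1)`. -/
def bit (k : ℕ) (ω : ℝ) : ℕ := ⌊ω * 2 ^ (k + 1)⌋₊ % 2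

/-- A countable family of i.i.d. uniform-`[0,1]` random variables. -/
def unif (i : ℕ) (ω : ℝ) : ℝ := ∑' k : ℕ, (bit (Nat.pair i k) ω : ℝ) / 2 ^ (k + 1)

/-- The cumulative distribution function of the Poisson distribution with parameter `l`. -/
def poissonCDF (l : ℝ) (k : ℕ) : ℝ :=
  Real.exp (-l) * ∑ j ∈ Finset.range (k + 1), l ^ j / (Nat.factorial j : ℝ)

/-- Sampling from the Poisson distribution with parameter `l` by inversion of the CDF:
if `u` is uniform on `[0,1)` then `poissonInv l u` is `Pois(l)`-distributed. -/
def poissonInv (l u : ℝ) : ℕ := sInf {k : ℕ | u < poissonCDF l k}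

/-- The walk driven by the random step function `stepF` with seeds `u`, started at `x`. -/
def walkFrom {V : Type*} (stepF : ℝ → V → V) (u : ℕ → ℝ) (x : V) : ℕ → V
  | 0 => x
  | n + 1 => stepF (u n) (walkFrom stepF u x n)

/-- Casting `ℕ∞` to `ℝ≥0∞`. -/
def toENN (m : ℕ∞) : ℝ≥0∞ := if m = ⊤ then ⊤ else ((WithTop.untopD 0 m : ℕ) : ℝ≥0∞)

/-- The real value of an extended natural number (`⊤` is mapped to `0`). -/
def natVal (m : ℕ∞) : ℝ := (WithTop.untopD 0 m : ℕ)

/-! ### The frog model over an abstract random-walk model -/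

/-- The data of a random-walk model on the vertex set `V`: a random step function (driven by
a uniform-`[0,1)` seed) describing one step of the simple random walk on the underlying
graph, together with an (injective) encoding `vidx` of the vertices, used to allocate
independent seeds to the various particles. -/
structure Model (V : Type*) where
  stepF : ℝ → V → V
  vidx : V → ℕ

variable {V : Type*}

/-- The number of sleeping particles initially at `v`: `Pois(lam)`-distributed,
independently over vertices. -/
def Model.count (M : Model V) (lam : ℝ) (v : V) (ω : ℝ) : ℕ :=
  poissonInv lam (unif (Nat.pair 0 (M.vidx v)) ω)

/-- The infinite random walk picked by the `i`-th particle initially at `v`. -/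
def Model.ptraj (M : Model V) (v : V) (i : ℕ) (ω : ℝ) : ℕ → V :=
  walkFrom M.stepF (fun k => unif (Nat.pair 1 (Nat.pair (M.vidx v) (Nat.pair i k))) ω) v

/-- The infinite random walk picked by the planted particle, started at `o`. -/
def Model.planted (M : Model V) (o : V) (ω : ℝ) : ℕ → V :=
  walkFrom M.stepF (fun k => unif (Nat.pair 2 k) ω) o

/-- `M.ell lam U po t tp x y ω` is the least `j` such that the walk picked by one of the
`Pois(lam)` particles initially at `x` (these exist only when `x` lies in the region `U`) is
at `y` at time `j ≤ t` (so particles have lifetime `t`), or such that the walk picked by the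
planted particle is at `y` at time `j ≤ tp` in case the planted particle is present and starts
at `x` (i.e. `po = some x`; the planted particle has lifetime `tp`).  It is `⊤` = `∞` if there
is no such `j`. -/
def Model.ell (M : Model V) (lam : ℝ) (U : Set V) (po : Option V) (t tp : ℕ∞)
    (x y : V) (ω : ℝ) : ℕ∞ :=
  sInf ((fun j : ℕ => (j : ℕ∞)) ''
    {j : ℕ | (x ∈ U ∧ (j : ℕ∞) ≤ t ∧ ∃ i < M.count lam x ω, M.ptraj x i ω j = y)
      ∨ (po = some x ∧ (j : ℕ∞) ≤ tp ∧ M.planted x ω j = y)})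

/-- The activation time `AT(x)` of the vertex `x`, when the particles initially occupying `A`
(together with the planted particle, if present) are the ones active at time `0`: the infimum
of `ℓ(x₀,x₁) + ⋯ + ℓ(x_{m-1},x_m)` over all finite chains `x₀, x₁, …, x_m = x` of vertices
with `x₀ ∈ A`. -/
def Model.actTime (M : Model V) (lam : ℝ) (U : Set V) (po : Option V) (t tp : ℕ∞)
    (A : Set V) (x : V) (ω : ℝ) : ℕ∞ :=
  sInf {s : ℕ∞ | ∃ (m : ℕ) (c : ℕ → V), c 0 ∈ A ∧ c m = x ∧
    s = ∑ i ∈ Finset.range m, M.ell lam U po t tp (c i) (c (i + 1)) ω}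

/-- The set of vertices visited by an active particle before the process dies out. -/
def Model.visited (M : Model V) (lam : ℝ) (U : Set V) (po : Option V) (t tp : ℕ∞)
    (A : Set V) (ω : ℝ) : Set V :=
  {x | M.actTime lam U po t tp A x ω < ⊤}

/-- The susceptibility `𝒮(G)`: the least lifetime `τ ∈ ℕ` for which every vertex is visited
by an active particle before the process dies out, in the frog model with particle density
`lam`, origin `o`, and one planted particle at `o` (the particles at `o` are the initially
active ones). -/
def Model.suscep (M : Model V) (lam : ℝ) (o : V) (ω : ℝ) : ℕ∞ :=
  sInf ((fun τ : ℕ => (τ : ℕ∞)) ''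
    {τ : ℕ | ∀ x : V, M.actTime lam Set.univ (some o) (τ : ℕ∞) (τ : ℕ∞) {o} x ω < ⊤})

/-- The expected susceptibility `E_λ[𝒮(G)]`. -/
def Model.suscepMean (M : Model V) (lam : ℝ) (o : V) : ℝ :=
  (∫⁻ ω, toENN (M.suscep lam o ω) ∂μ).toReal

/-! ### Simple random walk on a finite graph -/

/-- One step of the simple random walk on the graph `G`, driven by a uniform-`[0,1)` seed:
a uniformly chosen neighbour of the current position. -/
def gstep {V : Type*} [Fintype V] (G : SimpleGraph V) (u : ℝ) (v : V) : V := by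
  classical
  exact if h : 0 < (G.neighborFinset v).card then
    ((G.neighborFinset v).equivFin.symm
      ⟨min (⌊u * ((G.neighborFinset v).card : ℝ)⌋₊) ((G.neighborFinset v).card - 1),
        Nat.lt_of_le_of_lt (Nat.min_le_right _ _) (Nat.sub_lt h Nat.one_pos)⟩).1
  else v

/-- The random-walk model associated with the simple random walk on a finite graph. -/
def graphModel {V : Type*} [Fintype V] (G : SimpleGraph V) : Model V :=
  ⟨gstep G, fun v => (Fintype.equivFin V v : ℕ)⟩

/-- The lazy version of a random step function: with probability `1/2` stay put, otherwise
perform a step of the original walk. -/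
def lazyStepF {V : Type*} (f : ℝ → V → V) : ℝ → V → V :=
  fun u v => if u < 1/2 then v else f (2 * u - 1) v

/-! ### The cycle, the torus, and `ℤ^d` -/

/-- One step of the simple random walk on the `n`-cycle `C_n` (with vertex set `ZMod n`):
`+1` or `-1` with probability `1/2` each. -/
def cycleStep (n : ℕ) (u : ℝ) (x : ZMod n) : ZMod n := if u < 1/2 then x + 1 else x - 1

/-- The random-walk model for the `n`-cycle `C_n`. -/
def cycleModel (n : ℕ) : Model (ZMod n) := ⟨cycleStep n, ZMod.val⟩

/-- One step of the simple random walk on the torus `T_d(n)` (with vertex set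
`(ℤ/nℤ)^d`): one of the `2d` moves `± e_i` chosen uniformly at random. -/
def torusStep (d n : ℕ) (u : ℝ) (x : Fin d → ZMod n) : Fin d → ZMod n :=
  fun j => if 2 * (j : ℕ) = min (⌊u * (2 * (d:ℝ))⌋₊) (2 * d - 1) then x j + 1
    else if 2 * (j : ℕ) + 1 = min (⌊u * (2 * (d:ℝ))⌋₊) (2 * d - 1) then x j - 1
    else x j

/-- An injective encoding of the vertices of `T_d(n)` by natural numbers. -/
def torusIdx (d n : ℕ) (x : Fin d → ZMod n) : ℕ :=
  (List.ofFn fun i => (x i).val).foldr Nat.pair 0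

/-- The random-walk model for the torus `T_d(n)`. -/
def torusModel (d n : ℕ) : Model (Fin d → ZMod n) := ⟨torusStep d n, torusIdx d n⟩

/-- One step of the simple random walk on `ℤ^d`. -/
def zdStep (d : ℕ) (u : ℝ) (x : Fin d → ℤ) : Fin d → ℤ :=
  fun j => if 2 * (j : ℕ) = min (⌊u * (2 * (d:ℝ))⌋₊) (2 * d - 1) then x j + 1
    else if 2 * (j : ℕ) + 1 = min (⌊u * (2 * (d:ℝ))⌋₊) (2 * d - 1) then x j - 1
    else x j

/-- `ρ(d) = Pr₀[T₀⁺ = ∞]`: the escape probability of the simple random walk on `ℤ^d`. -/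
def rho (d : ℕ) : ℝ :=
  (μ {ω | ∀ m : ℕ, 0 < m →
    walkFrom (zdStep d) (fun k => unif k ω) (fun _ => (0:ℤ)) m ≠ fun _ => 0}).toReal

/-! ### Cover times by multiple random walks -/

/-- The `w`-th walk of a family of independent simple random walks on `T_d(n)`, each started
from an independent uniformly chosen vertex. -/
def torusWalk (d n : ℕ) (w : ℕ) (ω : ℝ) : ℕ → (Fin d → ZMod n) :=
  walkFrom (torusStep d n) (fun k => unif (Nat.pair 1 (Nat.pair w k)) ω)
    (fun i => ((⌊unif (Nat.pair 0 (Nat.pair w (i : ℕ))) ω * (n:ℝ)⌋₊ : ℕ) : ZMod n))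

/-- `𝒞(T_d(n), t)`: the number of independent uniformly-started simple random walks of
length `t` needed to cover `T_d(n)`. -/
def torusCoverC (d n t : ℕ) (ω : ℝ) : ℕ∞ :=
  sInf ((fun s : ℕ => (s : ℕ∞)) ''
    {s : ℕ | ∀ x : Fin d → ZMod n, ∃ w, 1 ≤ w ∧ w ≤ s ∧ ∃ j ≤ t, torusWalk d n w ω j = x})

/-- `𝒟(T_d(n), s)`: the common walk length needed for `s` independent uniformly-started
simple random walks to cover `T_d(n)`. -/
def torusCoverD (d n s : ℕ) (ω : ℝ) : ℕ∞ :=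
  sInf ((fun t : ℕ => (t : ℕ∞)) ''
    {t : ℕ | ∀ x : Fin d → ZMod n, ∃ w, 1 ≤ w ∧ w ≤ s ∧ ∃ j ≤ t, torusWalk d n w ω j = x})

/-- `E[𝒞(T_d(n), t)]`. -/
def torusCoverCMean (d n t : ℕ) : ℝ := (∫⁻ ω, toENN (torusCoverC d n t ω) ∂μ).toReal

/-- The `w`-th walk of a family of independent simple random walks on the finite graph `G`,
each started from an independent uniformly chosen vertex. -/
def gWalkUnif {V : Type*} [Fintype V] [Nonempty V] (G : SimpleGraph V) (w : ℕ) (ω : ℝ) :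
    ℕ → V :=
  walkFrom (gstep G) (fun k => unif (Nat.pair 1 (Nat.pair w k)) ω)
    ((Fintype.equivFin V).symm
      ⟨min (⌊unif (Nat.pair 0 w) ω * (Fintype.card V : ℝ)⌋₊) (Fintype.card V - 1),
        Nat.lt_of_le_of_lt (Nat.min_le_right _ _) (Nat.sub_lt Fintype.card_pos Nat.one_pos)⟩)

/-- `𝒞(G, t)`: the number of independent uniformly-started simple random walks of length
`t` needed to cover the graph `G`. -/
def gCoverC {V : Type*} [Fintype V] [Nonempty V] (G : SimpleGraph V) (t : ℕ) (ω : ℝ) : ℕ∞ :=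
  sInf ((fun s : ℕ => (s : ℕ∞)) ''
    {s : ℕ | ∀ x : V, ∃ w, 1 ≤ w ∧ w ≤ s ∧ ∃ j ≤ t, gWalkUnif G w ω j = x})

/-! ### Boxes and density in the torus -/

/-- The box of the side-length-`r` partition of `T_d(n)` indexed by
`v ∈ {0, …, ⌊n/r⌋ - 1}^d`: in each coordinate it covers `[v i * r, (v i + 1) * r)`, except
that the boxes with an extremal index absorb the remainder `n mod r` (so that their side
lengths lie in `[r, 2r)`). -/
def box (d n r : ℕ) (v : Fin d → ℕ) : Set (Fin d → ZMod n) :=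
  {x | ∀ i : Fin d, ∃ j : ℕ, x i = (j : ZMod n) ∧ v i * r ≤ j ∧
    j < (if v i + 1 = n / r then n else (v i + 1) * r)}

/-- A set `A ⊆ T_d(n)` is `(α, r)`-dense if it occupies at least an `α`-fraction of every box
of the side-length-`r` partition of `T_d(n)`. -/
def IsDense (d n r : ℕ) (α : ℝ) (A : Set (Fin d → ZMod n)) : Prop :=
  ∀ v : Fin d → ℕ, (∀ i, v i < n / r) →
    α * ((box d n r v).ncard : ℝ) ≤ ((A ∩ box d n r v).ncard : ℝ)

/-! ### Expanders -/

/-- The transition matrix of the simple random walk on `G`. -/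
def transMat {V : Type*} [Fintype V] (G : SimpleGraph V) : Matrix V V ℝ := by
  classical
  exact Matrix.of fun x y => if G.Adj x y then ((G.neighborSet x).ncard : ℝ)⁻¹ else 0

/-- The transition matrix `P_L = (I + P)/2` of the lazy simple random walk on `G`. -/
def lazyMat {V : Type*} [Fintype V] [DecidableEq V] (G : SimpleGraph V) : Matrix V V ℝ :=
  (2:ℝ)⁻¹ • (1 + transMat G)

/-- `G` is a `k`-regular graph. -/
def IsReg {V : Type*} (G : SimpleGraph V) (k : ℕ) : Prop :=
  ∀ v, (G.neighborSet v).ncard = k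

/-- `G` is a `γ`-expander: the spectral gap of the simple random walk on `G` (the second
smallest eigenvalue of `I - P`) is at least `γ`.  By the variational characterisation of
eigenvalues of the symmetric matrix `I - P` (for regular `G`), this says exactly that
`⟪f, (I - P) f⟫ ≥ γ * ⟪f, f⟫` for every `f` orthogonal to the constant functions. -/
def IsExpander {V : Type*} [Fintype V] (G : SimpleGraph V) (γ : ℝ) : Prop :=
  ∀ f : V → ℝ, (∑ v, f v) = 0 →
    γ * ∑ v, (f v) ^ 2 ≤ ∑ v, f v * (f v - ∑ w, transMat G v w * f w)

/-! ### General finite Markov chains -/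

/-- One step of the Markov chain with transition probabilities `P`, sampled by inversion of
the CDF with respect to a fixed enumeration of the (finite) state space. -/
def mcStep {St : Type*} [Fintype St] [Nonempty St] (P : St → St → ℝ) (u : ℝ) (x : St) :
    St := by
  classical
  exact (Fintype.equivFin St).symm
    ⟨min (sInf {k : ℕ | u < ∑ z ∈ Finset.univ.filter
        (fun z => ((Fintype.equivFin St) z : ℕ) ≤ k), P x z}) (Fintype.card St - 1),
      Nat.lt_of_le_of_lt (Nat.min_le_right _ _) (Nat.sub_lt Fintype.card_pos Nat.one_pos)⟩


/-!
The seeds `unif k` are independent and uniform on `[0, 1]`: they are built from disjoint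
families of binary digits of a uniform sample `ω ∈ [0, 1)`, and the first `M` digits of `ω` are
uniform on `{0, 1}^M` because they are the digits of `⌊ω 2^M⌋`. As `mcStep` inverts the CDF of
the transition probabilities, the chain follows a given path `v₀ = a, v₁, …, vₙ` exactly when each
seed `unif k` falls in an interval of length `P(v_k, v_{k+1})`, so the path has probability
`∏ P(v_k, v_{k+1})`; this gives the Markov property at fixed times. Splitting `{X_i = b}` according
to the first visit `T_b = j ≤ i` then gives `P^i(a,b) = ∑_{j ≤ i} Pr_a[T_b = j] P^{i-j}(b,b)`.
Summing over `i ≤ t`, the resulting double sum over `j + m ≤ t` lies between the sums over the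
rectangles `[0,t] × [0,s]` (after extending to `i ≤ t + s`) and `[0,t] × [0,t]`, which are
`Pr_a[T_b ≤ t] · E_b[N_s(b)]` and `Pr_a[T_b ≤ t] · E_b[N_t(b)]`.
-/

open Finset

instance : IsProbabilityMeasure μ := ⟨by simp [μ]⟩

lemma bit_lt_two (k : ℕ) (ω : ℝ) : bit k ω < 2 := Nat.mod_lt _ two_pos

lemma measurable_bit (k : ℕ) : Measurable (bit k) :=
  (measurable_from_top (f := fun n : ℕ => n % 2)).comp
    (Nat.measurable_floor.comp (measurable_id.mul_const _))

lemma bit_eq_floor_div_mod {N k : ℕ} (hk : k < N) (ω : ℝ) :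
    bit k ω = ⌊ω * 2 ^ N⌋₊ / 2 ^ (N - 1 - k) % 2 := by
  have hpow : (2 : ℝ) ^ N = 2 ^ (k + 1) * ((2 ^ (N - 1 - k) : ℕ) : ℝ) := by
    rw [Nat.cast_pow, Nat.cast_ofNat, ← pow_add]
    congr 1
    omega
  rw [← Nat.floor_div_natCast, hpow, ← mul_assoc, mul_div_cancel_right₀ _ (by positivity)]
  rfl

lemma measureReal_floor_mul_two_pow_eq {N m : ℕ} (hm : m < 2 ^ N) :
    μ.real {ω | ⌊ω * 2 ^ N⌋₊ = m} = (2 ^ N)⁻¹ := by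
  have hpos : (0 : ℝ) < 2 ^ N := by positivity
  have hcell : {ω : ℝ | ⌊ω * 2 ^ N⌋₊ = m} ∩ Set.Ico 0 1
      = Set.Ico ((m : ℝ) / 2 ^ N) ((m + 1) / 2 ^ N) := by
    have hm' : (m : ℝ) + 1 ≤ 2 ^ N := by exact_mod_cast hm
    ext ω
    simp only [Set.mem_inter_iff, Set.mem_ofPred_eq, Set.mem_Ico, div_le_iff₀ hpos,
      lt_div_iff₀ hpos]
    constructor
    · rintro ⟨h, h0, -⟩
      exact (Nat.floor_eq_iff (by positivity)).1 h
    · rintro ⟨h0, h1⟩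
      have hω : 0 ≤ ω := nonneg_of_mul_nonneg_left (le_trans (Nat.cast_nonneg m) h0) hpos
      exact ⟨(Nat.floor_eq_iff (by positivity)).2 ⟨h0, h1⟩, hω, by nlinarith⟩
  rw [measureReal_def, μ, Measure.restrict_apply' measurableSet_Ico, hcell, Real.volume_Ico,
    ENNReal.toReal_ofReal (by rw [sub_nonneg]; gcongr; linarith)]
  field_simp
  ring

lemma card_filter_forall_apply_eq {α β ι : Type*} [Fintype α] [DecidableEq α] [Fintype β]
    [DecidableEq β] [Fintype ι] {s : ι → α} (hs : Function.Injective s) (ε : ι → β) :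
    #{g : α → β | ∀ i, g (s i) = ε i}
      = Fintype.card β ^ (Fintype.card α - Fintype.card ι) := by
  set T : α → Finset β := fun a => {x | ∀ i, s i = a → x = ε i}
  have hT : ∀ a, #(T a) = if a ∈ univ.image s then 1 else Fintype.card β := by
    intro a
    split_ifs with ha
    · obtain ⟨i, -, rfl⟩ := mem_image.1 ha
      rw [card_eq_one]
      exact ⟨ε i, by ext x; simp [T, hs.eq_iff]⟩
    · rw [show T a = univ by ext x; simp_all [T]]
      rfl
  have hfilter : ({g : α → β | ∀ i, g (s i) = ε i} : Finset _) = Fintype.piFinset T := by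
    ext g
    simpa [T] using ⟨fun h a i hi => hi ▸ h i, fun h i => h _ i rfl⟩
  rw [hfilter, Fintype.card_piFinset, prod_congr rfl fun a _ => hT a, prod_ite, prod_const_one,
    one_mul, prod_const]
  have hfree : ({a | a ∉ univ.image s} : Finset α) = univ \ univ.image s := by ext; simp
  rw [hfree, card_univ_sdiff, card_image_of_injective _ hs, card_univ]

lemma measureReal_forall_bit_eq {ι : Type*} [Fintype ι] {s : ι → ℕ}
    (hs : Function.Injective s) (ε : ι → Fin 2) :
    μ.real {ω | ∀ i, bit (s i) ω = ε i} = (2 ^ Fintype.card ι)⁻¹ := by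
  obtain ⟨M, hM⟩ : ∃ M, ∀ i, s i < M :=
    ⟨univ.sup s + 1, fun i => Nat.lt_succ_of_le (le_sup (mem_univ i))⟩
  set r : ι → Fin M := fun i => ⟨M - 1 - s i, by have := hM i; omega⟩
  have hr : Function.Injective r := fun i j h => by
    have := hM i; have := hM j
    exact hs (by simp only [r, Fin.mk.injEq] at h; omega)
  set G : Finset (Fin M → Fin 2) := {g | ∀ i, g (r i) = ε i}
  have hae : {ω | ∀ i, bit (s i) ω = ε i}
      =ᵐ[μ] ⋃ g ∈ G, {ω : ℝ | ⌊ω * 2 ^ M⌋₊ = finFunctionFinEquiv g} := by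
    refine Filter.eventuallyEq_set.2 ?_
    filter_upwards [ae_restrict_mem measurableSet_Ico] with ω hω
    have hlt : ⌊ω * 2 ^ M⌋₊ < 2 ^ M := by
      rw [Nat.floor_lt (by have := hω.1; positivity)]
      push_cast
      nlinarith [hω.2, pow_pos (two_pos : (0 : ℝ) < 2) M]
    set D := finFunctionFinEquiv.symm (⟨⌊ω * 2 ^ M⌋₊, hlt⟩ : Fin (2 ^ M))
    have hD : ∀ i, bit (s i) ω = D (r i) := fun i => by
      rw [finFunctionFinEquiv_symm_apply_val, bit_eq_floor_div_mod (hM i)]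
    simp only [Set.mem_ofPred_eq, Set.mem_iUnion, hD, Fin.val_inj, exists_prop]
    constructor
    · intro h
      exact ⟨D, by simpa [G] using h, by simp [D]⟩
    · rintro ⟨g, hg, hωg⟩
      have : D = g := (Equiv.symm_apply_eq _).2 (Fin.ext hωg)
      simpa [this, G] using hg
  have hmeas : ∀ m : ℕ, MeasurableSet {ω : ℝ | ⌊ω * 2 ^ M⌋₊ = m} := fun m =>
    Nat.measurable_floor.comp (measurable_id.mul_const _) (measurableSet_singleton m)
  rw [measureReal_congr hae, measureReal_biUnion_finset _ (fun g _ => hmeas _),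
    sum_congr rfl fun g _ => measureReal_floor_mul_two_pow_eq (finFunctionFinEquiv g).2,
    sum_const, nsmul_eq_mul, card_filter_forall_apply_eq hr, Fintype.card_fin, Fintype.card_fin]
  · have hle : Fintype.card ι ≤ M := by
      simpa using Fintype.card_le_of_injective r hr
    rw [Nat.cast_pow, Nat.cast_ofNat, pow_sub₀ _ two_ne_zero hle]
    field_simp
  · intro g _ g' _ hne
    exact Set.disjoint_left.2 fun ω h h' => hne (finFunctionFinEquiv.injective
      (Fin.ext (Eq.trans (Eq.symm h) h')))

lemma bit_div_two_pow_le (m k : ℕ) (ω : ℝ) : (bit m ω : ℝ) / 2 ^ (k + 1) ≤ 1 / 2 / 2 ^ k := by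
  have : (bit m ω : ℝ) ≤ 1 := by exact_mod_cast Nat.le_of_lt_succ (bit_lt_two m ω)
  rw [div_div, ← pow_succ']
  gcongr

lemma summable_bit_div_two_pow (j : ℕ) (ω : ℝ) :
    Summable fun k => (bit (Nat.pair j k) ω : ℝ) / 2 ^ (k + 1) :=
  (summable_geometric_two' 1).of_nonneg_of_le (fun _ => by positivity)
    fun k => bit_div_two_pow_le _ k ω

def unifApprox (j N : ℕ) (ω : ℝ) : ℝ := ∑ k ∈ range N, (bit (Nat.pair j k) ω : ℝ) / 2 ^ (k + 1)

lemma unifApprox_le_unif (j N : ℕ) (ω : ℝ) : unifApprox j N ω ≤ unif j ω :=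
  (summable_bit_div_two_pow j ω).sum_le_tsum _ fun _ _ => by positivity

lemma unif_le_unifApprox_add (j N : ℕ) (ω : ℝ) :
    unif j ω ≤ unifApprox j N ω + (2 ^ N)⁻¹ := by
  rw [unif, ← (summable_bit_div_two_pow j ω).sum_add_tsum_nat_add N, unifApprox]
  gcongr
  calc ∑' k, (bit (Nat.pair j (k + N)) ω : ℝ) / 2 ^ (k + N + 1)
      ≤ ∑' k : ℕ, (2 ^ N)⁻¹ / 2 / 2 ^ k :=
        ((summable_nat_add_iff N).2 (summable_bit_div_two_pow j ω)).tsum_le_tsum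
          (fun k => (bit_div_two_pow_le _ (k + N) ω).trans_eq (by field_simp; ring))
          (summable_geometric_two' _)
    _ = (2 ^ N)⁻¹ := tsum_geometric_two' _

lemma measurable_unif (j : ℕ) : Measurable (unif j) :=
  measurable_of_tendsto_metrizable
    (fun _ => Finset.measurable_sum _ fun k _ => (measurable_from_top.comp
      (measurable_bit (Nat.pair j k))).div_const _)
    (tendsto_pi_nhds.2 fun ω => (summable_bit_div_two_pow j ω).hasSum.tendsto_sum_nat)

/-- The first `N` binary digits of `unif j ω`, indexed so that `finFunctionFinEquiv`, which reads
the least significant digit first, turns them into `2 ^ N * unifApprox j N ω`. -/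
def seedDigits (j N : ℕ) (ω : ℝ) : Fin N → Fin 2 :=
  fun i => ⟨bit (Nat.pair j (N - 1 - i)) ω, bit_lt_two _ _⟩

lemma unifApprox_eq_finFunctionFinEquiv (j N : ℕ) (ω : ℝ) :
    unifApprox j N ω = (finFunctionFinEquiv (seedDigits j N ω) : ℕ) / 2 ^ N := by
  rw [finFunctionFinEquiv_apply, Nat.cast_sum, sum_div, unifApprox,
    ← sum_range_reflect _ N, ← Fin.sum_univ_eq_sum_range]
  refine sum_congr rfl fun i _ => ?_
  rw [show (2 : ℝ) ^ N = 2 ^ (N - 1 - i + 1) * 2 ^ (i : ℕ) by rw [← pow_add]; congr 1; omega]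
  simp only [seedDigits, Nat.cast_mul, Nat.cast_pow, Nat.cast_ofNat]
  field_simp

lemma measureReal_forall_seedDigits_mem {n N : ℕ} (S : Fin n → Finset (Fin N → Fin 2)) :
    μ.real {ω | ∀ j : Fin n, seedDigits j N ω ∈ S j} = ∏ j, (#(S j) / 2 ^ N : ℝ) := by
  set s : Fin n × Fin N → ℕ := fun p => Nat.pair p.1 (N - 1 - p.2)
  have hs : Function.Injective s := fun p q h => by
    obtain ⟨h1, h2⟩ := Nat.pair_eq_pair.1 h
    have := p.2.2; have := q.2.2
    exact Prod.ext (Fin.ext h1) (Fin.ext (by omega))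
  have hcyl : ∀ F : Fin n → Fin N → Fin 2, {ω | ∀ j : Fin n, seedDigits j N ω = F j}
      = {ω | ∀ p, bit (s p) ω = F p.1 p.2} := fun F => by
    ext ω
    simp [funext_iff, Fin.ext_iff, seedDigits, s]
  have hmeas : ∀ F : Fin n → Fin N → Fin 2,
      MeasurableSet {ω | ∀ j : Fin n, seedDigits j N ω = F j} := fun F => by
    rw [hcyl, Set.ofPred_forall]
    exact MeasurableSet.iInter fun p => measurable_bit _ (measurableSet_singleton _)
  have hunion : {ω | ∀ j : Fin n, seedDigits j N ω ∈ S j}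
      = ⋃ F ∈ Fintype.piFinset S, {ω | ∀ j : Fin n, seedDigits j N ω = F j} := by
    ext ω
    simpa [funext_iff] using ⟨fun h => ⟨_, h, fun _ _ => rfl⟩,
      fun ⟨F, hF, hωF⟩ j => (funext (hωF j) : seedDigits j N ω = F j) ▸ hF j⟩
  rw [hunion, measureReal_biUnion_finset _ fun F _ => hmeas F]
  · rw [sum_congr rfl fun F _ => by rw [hcyl, measureReal_forall_bit_eq hs], sum_const,
      Fintype.card_piFinset, nsmul_eq_mul, Fintype.card_prod, Fintype.card_fin, Fintype.card_fin,
      prod_div_distrib, prod_const, card_univ, Fintype.card_fin, ← pow_mul]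
    push_cast
    ring
  · intro F _ F' _ hne
    exact Set.disjoint_left.2 fun ω h h' => hne (funext fun j => (h j).symm.trans (h' j))

lemma card_finFunctionFinEquiv_mem_Ico {N a b : ℕ} (hb : b ≤ 2 ^ N) :
    #{h : Fin N → Fin 2 | (finFunctionFinEquiv h : ℕ) ∈ Set.Ico a b} = b - a := by
  rw [card_equiv finFunctionFinEquiv
      (t := ({m | (m : ℕ) ∈ Set.Ico a b} : Finset (Fin (2 ^ N)))) (by simp),
    ← Nat.card_Ico, ← card_map Fin.valEmbedding]
  congr 1
  ext m
  simp only [Finset.mem_map, mem_filter, mem_univ, true_and, Set.mem_Ico, Finset.mem_Ico,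
    Fin.valEmbedding_apply]
  exact ⟨fun ⟨m', hm', hm⟩ => hm ▸ hm', fun hm => ⟨⟨m, by omega⟩, hm, rfl⟩⟩

section Squeeze

variable {j N : ℕ} {ω c d : ℝ}

lemma unif_mem_Ico_of_seedDigits (hd : 0 ≤ d)
    (h : (finFunctionFinEquiv (seedDigits j N ω) : ℕ) ∈ Set.Ico ⌈c * 2 ^ N⌉₊ (⌈d * 2 ^ N⌉₊ - 1)) :
    unif j ω ∈ Set.Ico c d := by
  set D := (finFunctionFinEquiv (seedDigits j N ω) : ℕ)
  have hpos : (0 : ℝ) < 2 ^ N := by positivity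
  have happrox : unifApprox j N ω = D / 2 ^ N := unifApprox_eq_finFunctionFinEquiv j N ω
  obtain ⟨hA, hB⟩ := h
  have hup : (D : ℝ) + 1 < d * 2 ^ N := by
    have h1 : D + 1 + 1 ≤ ⌈d * 2 ^ N⌉₊ := by omega
    have h2 := Nat.ceil_lt_add_one (by positivity : 0 ≤ d * 2 ^ N)
    have h3 : ((D + 1 + 1 : ℕ) : ℝ) ≤ ⌈d * 2 ^ N⌉₊ := by exact_mod_cast h1
    push_cast at h3
    linarith
  have hlow : c * 2 ^ N ≤ D := Nat.ceil_le.1 hA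
  constructor
  · calc c ≤ D / 2 ^ N := by rwa [le_div_iff₀ hpos]
      _ = unifApprox j N ω := happrox.symm
      _ ≤ unif j ω := unifApprox_le_unif j N ω
  · calc unif j ω ≤ unifApprox j N ω + (2 ^ N)⁻¹ := unif_le_unifApprox_add j N ω
      _ = (D + 1) / 2 ^ N := by rw [happrox]; field_simp
      _ < d := by rwa [div_lt_iff₀ hpos]

lemma seedDigits_mem_Ico_of_unif (h : unif j ω ∈ Set.Ico c d) :
    (finFunctionFinEquiv (seedDigits j N ω) : ℕ) ∈ Set.Ico (⌈c * 2 ^ N⌉₊ - 1) ⌈d * 2 ^ N⌉₊ := by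
  set D := (finFunctionFinEquiv (seedDigits j N ω) : ℕ)
  have hpos : (0 : ℝ) < 2 ^ N := by positivity
  have happrox : unifApprox j N ω = D / 2 ^ N := unifApprox_eq_finFunctionFinEquiv j N ω
  have hlow : c * 2 ^ N ≤ (D + 1 : ℕ) := by
    have : c ≤ (D + 1) / 2 ^ N := by
      rw [add_div, ← happrox, one_div]
      exact h.1.trans (unif_le_unifApprox_add j N ω)
    rw [le_div_iff₀ hpos] at this
    exact_mod_cast this
  have hup : (D : ℝ) < d * 2 ^ N := by
    have := (unifApprox_le_unif j N ω).trans_lt h.2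
    rwa [happrox, div_lt_iff₀ hpos] at this
  exact ⟨by have := Nat.ceil_le.2 hlow; omega, Nat.lt_ceil.2 hup⟩

end Squeeze

lemma tendsto_natCast_div_two_pow {k : ℕ → ℕ} {x C : ℝ} (hk : ∀ N, |(k N : ℝ) - x * 2 ^ N| ≤ C) :
    Tendsto (fun N => (k N : ℝ) / 2 ^ N) atTop (nhds x) := by
  have hC : Tendsto (fun N : ℕ => C / 2 ^ N) atTop (nhds 0) := by
    simpa [div_eq_mul_inv] using (tendsto_pow_atTop_nhds_zero_of_lt_one (r := (2⁻¹ : ℝ))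
      (by norm_num) (by norm_num)).const_mul C
  have hdist : ∀ N, |(k N : ℝ) / 2 ^ N - x| ≤ C / 2 ^ N := fun N => by
    have hpos : (0 : ℝ) < 2 ^ N := by positivity
    rw [le_div_iff₀ hpos, ← abs_of_pos hpos, ← abs_mul, abs_of_pos hpos, sub_mul,
      div_mul_cancel₀ _ hpos.ne']
    exact hk N
  exact tendsto_iff_norm_sub_tendsto_zero.2 (squeeze_zero (fun _ => norm_nonneg _) hdist hC)

theorem measureReal_forall_unif_mem_Ico {n : ℕ} {c d : Fin n → ℝ} (hc : ∀ j, 0 ≤ c j)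
    (hcd : ∀ j, c j ≤ d j) (hd : ∀ j, d j ≤ 1) :
    μ.real {ω | ∀ j : Fin n, unif j ω ∈ Set.Ico (c j) (d j)} = ∏ j, (d j - c j) := by
  set A : ℕ → Fin n → ℕ := fun N j => ⌈c j * 2 ^ N⌉₊
  set B : ℕ → Fin n → ℕ := fun N j => ⌈d j * 2 ^ N⌉₊
  have hB : ∀ N j, B N j ≤ 2 ^ N := fun N j => Nat.ceil_le.2 <| by
    push_cast
    exact mul_le_of_le_one_left (by positivity) (hd j)
  have hAB : ∀ N j, A N j ≤ B N j := fun N j => Nat.ceil_mono (by gcongr; exact hcd j)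
  have happrox : ∀ N j (k : ℕ), (k : ℤ) ≤ B N j - A N j + 1 → (B N j : ℤ) - A N j - 1 ≤ k →
      |(k : ℝ) - (d j - c j) * 2 ^ N| ≤ 2 := fun N j k hk₁ hk₂ => by
    have hc' := hc j
    have hd' : 0 ≤ d j := hc'.trans (hcd j)
    have := Nat.le_ceil (c j * 2 ^ N)
    have := Nat.le_ceil (d j * 2 ^ N)
    have := Nat.ceil_lt_add_one (by positivity : 0 ≤ c j * 2 ^ N)
    have := Nat.ceil_lt_add_one (by positivity : 0 ≤ d j * 2 ^ N)
    have hk₁' : (k : ℝ) ≤ B N j - A N j + 1 := by exact_mod_cast hk₁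
    have hk₂' : (B N j : ℝ) - A N j - 1 ≤ k := by exact_mod_cast hk₂
    rw [abs_le]
    constructor <;> nlinarith
  -- the event is squeezed between two events about the first `N` digits of the seeds, whose
  -- probabilities are explicit and converge to `∏ j, (d j - c j)`
  have hinner : ∀ N, ∏ j, ((B N j - 1 - A N j : ℕ) : ℝ) / 2 ^ N
      ≤ μ.real {ω | ∀ j : Fin n, unif j ω ∈ Set.Ico (c j) (d j)} := fun N => by
    simp_rw [← card_finFunctionFinEquiv_mem_Ico ((Nat.sub_le _ 1).trans (hB N _))]
    rw [← measureReal_forall_seedDigits_mem]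
    exact measureReal_mono fun ω hω j =>
      unif_mem_Ico_of_seedDigits ((hc j).trans (hcd j)) (mem_filter.1 (hω j)).2
  have houter : ∀ N, μ.real {ω | ∀ j : Fin n, unif j ω ∈ Set.Ico (c j) (d j)}
      ≤ ∏ j, ((B N j - (A N j - 1) : ℕ) : ℝ) / 2 ^ N := fun N => by
    simp_rw [← card_finFunctionFinEquiv_mem_Ico (hB N _)]
    rw [← measureReal_forall_seedDigits_mem]
    exact measureReal_mono fun ω hω j =>
      mem_filter.2 ⟨mem_univ _, seedDigits_mem_Ico_of_unif (hω j)⟩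
  refine le_antisymm (ge_of_tendsto' (tendsto_finsetProd _ fun j _ =>
    tendsto_natCast_div_two_pow fun N => happrox N j _ ?_ ?_) houter)
    (le_of_tendsto' (tendsto_finsetProd _ fun j _ =>
      tendsto_natCast_div_two_pow fun N => happrox N j _ ?_ ?_) hinner)
  all_goals have := hAB N j; omega

lemma ae_unif_mem_Ico : ∀ᵐ ω ∂μ, ∀ j, unif j ω ∈ Set.Ico (0 : ℝ) 1 := by
  refine ae_all_iff.2 fun j => ?_
  have hS : MeasurableSet {ω | ∀ i : Fin (j + 1), unif i ω ∈ Set.Ico (0 : ℝ) 1} := by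
    rw [Set.ofPred_forall]
    exact MeasurableSet.iInter fun i => measurable_unif i measurableSet_Ico
  have h := measureReal_forall_unif_mem_Ico (n := j + 1) (c := 0) (d := 1) (fun _ => le_rfl)
    (fun _ => zero_le_one) (fun _ => le_rfl)
  simp only [Pi.zero_apply, Pi.one_apply, sub_zero, prod_const_one, measureReal_def,
    ENNReal.toReal_eq_one_iff] at h
  filter_upwards [(mem_ae_iff_prob_eq_one hS).2 h] with ω hω using hω (Fin.last j)

section Step

open Matrix

variable {St : Type*} [Fintype St]

local notation "idx" => Fintype.equivFin _

def cumProb (P : Matrix St St ℝ) (x : St) (k : ℕ) : ℝ :=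
  ∑ z ∈ univ.filter (fun z => (idx z : ℕ) ≤ k), P x z

def lowerProb (P : Matrix St St ℝ) (x y : St) : ℝ :=
  ∑ z ∈ univ.filter (fun z => idx z < idx y), P x z

lemma mcStep_eq_equivFin_symm [Nonempty St] (P : Matrix St St ℝ) (u : ℝ) (x : St) :
    mcStep P u x = (idx).symm ⟨min (sInf {k | u < cumProb P x k}) (Fintype.card St - 1),
      Nat.lt_of_le_of_lt (Nat.min_le_right _ _) (Nat.sub_lt Fintype.card_pos Nat.one_pos)⟩ := rfl

variable {P : Matrix St St ℝ}

lemma cumProb_nonneg (hP : ∀ x y, 0 ≤ P x y) (x : St) (k : ℕ) : 0 ≤ cumProb P x k :=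
  sum_nonneg fun _ _ => hP _ _

lemma cumProb_card_sub_one {x : St} (hx : ∑ y, P x y = 1) :
    cumProb P x (Fintype.card St - 1) = 1 := by
  rw [cumProb, filter_true_of_mem fun z _ => Nat.le_sub_one_of_lt (idx z).2, hx]

lemma forall_cumProb_le_iff (hP : ∀ x y, 0 ≤ P x y) {u : ℝ} (hu : 0 ≤ u) (x y : St) :
    (∀ k < (idx y : ℕ), cumProb P x k ≤ u) ↔ lowerProb P x y ≤ u := by
  constructor
  · intro h
    rcases Nat.eq_zero_or_pos (idx y : ℕ) with h0 | h0
    · rwa [lowerProb, filter_false_of_mem fun z _ => by simp [Fin.lt_def, h0], sum_empty]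
    · have : lowerProb P x y = cumProb P x (idx y - 1) := by
        rw [lowerProb, cumProb]
        congr 1
        ext z
        simp only [mem_filter, mem_univ, true_and, Fin.lt_def]
        omega
      exact this ▸ h _ (by omega)
  · refine fun h k hk => (sum_le_sum_of_subset_of_nonneg (fun z => ?_)
      fun _ _ _ => hP _ _).trans h
    simp only [mem_filter, mem_univ, true_and, Fin.lt_def]
    omega

variable [DecidableEq St]

lemma cumProb_le_one (hP : P ∈ rowStochastic ℝ St) (x : St) (k : ℕ) : cumProb P x k ≤ 1 :=
  (sum_le_sum_of_subset_of_nonneg (filter_subset _ _) fun _ _ _ =>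
    nonneg_of_mem_rowStochastic hP).trans_eq (sum_row_of_mem_rowStochastic hP x)

lemma cumProb_equivFin (P : Matrix St St ℝ) (x y : St) :
    cumProb P x (idx y) = lowerProb P x y + P x y := by
  rw [cumProb, lowerProb, add_comm, ← sum_insert (by simp)]
  congr 1
  ext z
  simp [le_iff_lt_or_eq, Fin.val_inj, or_comm]

variable [Nonempty St]

lemma mcStep_eq_iff (hP : P ∈ rowStochastic ℝ St) {u : ℝ} (hu : u ∈ Set.Ico 0 1) (x y : St) :
    mcStep P u x = y ↔ u ∈ Set.Ico (lowerProb P x y) (lowerProb P x y + P x y) := by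
  have htop : Fintype.card St - 1 ∈ {k | u < cumProb P x k} := by
    rw [Set.mem_ofPred_eq, cumProb_card_sub_one (sum_row_of_mem_rowStochastic hP x)]
    exact hu.2
  rw [mcStep_eq_equivFin_symm, Equiv.symm_apply_eq, Fin.ext_iff, Fin.val_mk,
    min_eq_left (Nat.sInf_le htop), Nat.sInf_def ⟨_, htop⟩, Nat.find_eq_iff, Set.mem_Ico, and_comm]
  simp only [Set.mem_ofPred_eq, not_lt, cumProb_equivFin]
  rw [forall_cumProb_le_iff (fun _ _ => nonneg_of_mem_rowStochastic hP) hu.1]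

lemma mcStep_of_notMem_Ico (hP : P ∈ rowStochastic ℝ St) {u : ℝ} (hu : u ∉ Set.Ico 0 1)
    (x : St) : mcStep P u x = (idx).symm ⟨0, Fintype.card_pos⟩ := by
  rw [mcStep_eq_equivFin_symm]
  congr
  rw [Nat.eq_zero_of_le_zero (min_le_left _ _ |>.trans (Nat.sInf_eq_zero.2 ?_).le)]
  rw [Set.mem_Ico, not_and_or, not_le, not_lt] at hu
  rcases hu with hu | hu
  · exact Or.inl (hu.trans_le (cumProb_nonneg (fun _ _ => nonneg_of_mem_rowStochastic hP) x 0))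
  · exact Or.inr (Set.eq_empty_of_forall_notMem fun k hk =>
      (hk.trans_le (cumProb_le_one hP x k)).not_ge hu)

lemma measurableSet_mcStep_eq (hP : P ∈ rowStochastic ℝ St) (x y : St) :
    MeasurableSet {u | mcStep P u x = y} := by
  have : {u | mcStep P u x = y} = Set.Ico 0 1 ∩ Set.Ico (lowerProb P x y) (lowerProb P x y + P x y)
      ∪ (Set.Ico 0 1)ᶜ ∩ {_u | (idx).symm ⟨0, Fintype.card_pos⟩ = y} := by
    ext u
    by_cases hu : u ∈ Set.Ico (0 : ℝ) 1
    · simp [hu, mcStep_eq_iff hP hu]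
    · simp [hu, mcStep_of_notMem_Ico hP hu]
  rw [this]
  exact (measurableSet_Ico.inter measurableSet_Ico).union
    (measurableSet_Ico.compl.inter (MeasurableSet.const _))

end Step

lemma walkFrom_eq_iff {V : Type*} (f : ℝ → V → V) (u : ℕ → ℝ) (x : V) {n : ℕ}
    (v : Fin (n + 1) → V) :
    (∀ j : Fin (n + 1), walkFrom f u x j = v j)
      ↔ v 0 = x ∧ ∀ j : Fin n, f (u j) (v j.castSucc) = v j.succ := by
  constructor
  · intro h
    refine ⟨(h 0).symm, fun j => ?_⟩
    rw [← h j.succ, ← h j.castSucc]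
    rfl
  · rintro ⟨h0, h⟩ j
    induction j using Fin.induction with
    | zero => exact h0.symm
    | succ j ih => rw [← h j, ← ih]; rfl

section Chain

open Matrix

variable {St : Type*} [Fintype St] [Nonempty St]

def chain (P : Matrix St St ℝ) (a : St) (i : ℕ) (ω : ℝ) : St :=
  walkFrom (mcStep P) (fun k => unif k ω) a i

def chainPrefix (P : Matrix St St ℝ) (a : St) (n : ℕ) (ω : ℝ) : Fin (n + 1) → St :=
  fun j => chain P a j ω

lemma chainPrefix_apply_zero (P : Matrix St St ℝ) (a : St) (n : ℕ) (ω : ℝ) :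
    chainPrefix P a n ω 0 = a := rfl

lemma chainPrefix_succ_eq_snoc_iff {P : Matrix St St ℝ} {a : St} {n : ℕ} {ω : ℝ}
    {v : Fin (n + 1) → St} {w : St} :
    chainPrefix P a (n + 1) ω = Fin.snoc v w
      ↔ chainPrefix P a n ω = v ∧ chain P a (n + 1) ω = w := by
  simp only [funext_iff, Fin.forall_fin_succ' (n := n + 1), Fin.snoc_castSucc, Fin.snoc_last]
  rfl

variable [DecidableEq St] {P : Matrix St St ℝ} {a : St}

lemma measurableSet_chain_eq (hP : P ∈ rowStochastic ℝ St) (i : ℕ) (y : St) :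
    MeasurableSet {ω | chain P a i ω = y} := by
  induction i generalizing y with
  | zero => exact MeasurableSet.const (a = y)
  | succ i ih =>
    have : {ω | chain P a (i + 1) ω = y}
        = ⋃ z, {ω | chain P a i ω = z} ∩ unif i ⁻¹' {u | mcStep P u z = y} := by
      ext ω
      simp [chain, walkFrom]
    rw [this]
    exact MeasurableSet.iUnion fun z =>
      (ih z).inter (measurable_unif i (measurableSet_mcStep_eq hP z y))

lemma measurableSet_chainPrefix_eq (hP : P ∈ rowStochastic ℝ St) {n : ℕ} (v : Fin (n + 1) → St) :
    MeasurableSet {ω | chainPrefix P a n ω = v} := by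
  simp only [funext_iff, Set.ofPred_forall]
  exact MeasurableSet.iInter fun j => measurableSet_chain_eq hP j (v j)

theorem measureReal_chainPrefix_eq (hP : P ∈ rowStochastic ℝ St) {n : ℕ} {v : Fin (n + 1) → St}
    (hv : v 0 = a) :
    μ.real {ω | chainPrefix P a n ω = v} = ∏ j : Fin n, P (v j.castSucc) (v j.succ) := by
  have hae : {ω | chainPrefix P a n ω = v} =ᵐ[μ] {ω | ∀ j : Fin n, unif j ω ∈
      Set.Ico (lowerProb P (v j.castSucc) (v j.succ))
        (lowerProb P (v j.castSucc) (v j.succ) + P (v j.castSucc) (v j.succ))} := by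
    refine Filter.eventuallyEq_set.2 ?_
    filter_upwards [ae_unif_mem_Ico] with ω hω
    simp only [funext_iff, chainPrefix, chain, walkFrom_eq_iff, hv, true_and,
      mcStep_eq_iff hP (hω _)]
  rw [measureReal_congr hae, measureReal_forall_unif_mem_Ico]
  · simp
  · exact fun j => sum_nonneg fun _ _ => nonneg_of_mem_rowStochastic hP
  · exact fun j => le_add_of_nonneg_right (nonneg_of_mem_rowStochastic hP)
  · exact fun j => (cumProb_equivFin P _ _).symm.trans_le (cumProb_le_one hP _ _)

lemma measureReal_chainPrefix_snoc (hP : P ∈ rowStochastic ℝ St) {n : ℕ} (v : Fin (n + 1) → St)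
    (w : St) :
    μ.real {ω | chainPrefix P a (n + 1) ω = Fin.snoc v w}
      = μ.real {ω | chainPrefix P a n ω = v} * P (v (Fin.last n)) w := by
  by_cases hv : v 0 = a
  · rw [measureReal_chainPrefix_eq hP (by rwa [Fin.snoc_apply_zero]),
      measureReal_chainPrefix_eq hP hv, Fin.prod_univ_castSucc, Fin.snoc_castSucc, Fin.succ_last,
      Fin.snoc_last]
    congr 1
    exact prod_congr rfl fun j _ => by rw [Fin.succ_castSucc, Fin.snoc_castSucc, Fin.snoc_castSucc]
  · have hempty : ∀ {m} (v' : Fin (m + 1) → St), v' 0 ≠ a →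
        {ω | chainPrefix P a m ω = v'} = ∅ := fun v' hv' =>
      Set.eq_empty_of_forall_notMem fun ω h => hv' (h ▸ chainPrefix_apply_zero P a _ ω)
    rw [hempty v hv, hempty _ (by rwa [Fin.snoc_apply_zero])]
    simp

theorem measureReal_chainPrefix_eq_inter_chain_add (hP : P ∈ rowStochastic ℝ St) {n : ℕ}
    (v : Fin (n + 1) → St) (m : ℕ) (y : St) :
    μ.real ({ω | chainPrefix P a n ω = v} ∩ {ω | chain P a (n + m) ω = y})
      = μ.real {ω | chainPrefix P a n ω = v} * (P ^ m) (v (Fin.last n)) y := by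
  induction m generalizing n with
  | zero =>
    have hlast : ∀ ω ∈ {ω | chainPrefix P a n ω = v}, chain P a (n + 0) ω = v (Fin.last n) :=
      fun ω hω => congrFun hω (Fin.last n)
    by_cases h : v (Fin.last n) = y
    · have : {ω | chainPrefix P a n ω = v} ∩ {ω | chain P a (n + 0) ω = y}
          = {ω | chainPrefix P a n ω = v} :=
        Set.inter_eq_left.2 fun ω hω => (hlast ω hω).trans h
      rw [this]; simp [h]
    · have : {ω | chainPrefix P a n ω = v} ∩ {ω | chain P a (n + 0) ω = y} = ∅ :=
        Set.disjoint_iff_inter_eq_empty.1 <| Set.disjoint_left.2 fun ω hω hω' =>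
          h ((hlast ω hω).symm.trans hω')
      rw [this]; simp [h]
  | succ m ih =>
    have hunion : {ω | chainPrefix P a n ω = v} ∩ {ω | chain P a (n + (m + 1)) ω = y}
        = ⋃ w ∈ (univ : Finset St),
          {ω | chainPrefix P a (n + 1) ω = Fin.snoc v w} ∩ {ω | chain P a (n + 1 + m) ω = y} := by
      ext ω
      simp [chainPrefix_succ_eq_snoc_iff, Nat.add_right_comm n 1 m, add_assoc]
    rw [hunion, measureReal_biUnion_finset]
    · simp_rw [ih, measureReal_chainPrefix_snoc hP, Fin.snoc_last, pow_succ', mul_apply, mul_sum,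
        mul_assoc]
    · intro w _ w' _ hne
      exact Set.disjoint_left.2 fun ω h h' => hne <| by
        simpa using (chainPrefix_succ_eq_snoc_iff.1 h.1).2.symm.trans
          (chainPrefix_succ_eq_snoc_iff.1 h'.1).2
    · exact fun w _ => (measurableSet_chainPrefix_eq hP _).inter (measurableSet_chain_eq hP _ _)

theorem measureReal_chainPrefix_mem_inter_chain_add (hP : P ∈ rowStochastic ℝ St) {n : ℕ}
    {A : Finset (Fin (n + 1) → St)} {z : St} (hA : ∀ v ∈ A, v (Fin.last n) = z) (m : ℕ) (y : St) :
    μ.real ({ω | chainPrefix P a n ω ∈ A} ∩ {ω | chain P a (n + m) ω = y})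
      = μ.real {ω | chainPrefix P a n ω ∈ A} * (P ^ m) z y := by
  have hunion : ∀ B : Set ℝ, {ω | chainPrefix P a n ω ∈ A} ∩ B
      = ⋃ v ∈ A, {ω | chainPrefix P a n ω = v} ∩ B := fun B => by
    ext ω
    simp
  have hdisj : ∀ B : Set ℝ, (A : Set (Fin (n + 1) → St)).PairwiseDisjoint
      fun v => {ω | chainPrefix P a n ω = v} ∩ B := fun B v _ v' _ hne =>
    Set.disjoint_left.2 fun ω h h' => hne (h.1.symm.trans h'.1)
  have hmeas : ∀ B : Set ℝ, MeasurableSet B → ∀ v ∈ A,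
      MeasurableSet ({ω | chainPrefix P a n ω = v} ∩ B) := fun B hB v _ =>
    (measurableSet_chainPrefix_eq hP v).inter hB
  rw [hunion, measureReal_biUnion_finset (hdisj _) (hmeas _ (measurableSet_chain_eq hP _ _)),
    ← Set.inter_univ {ω | chainPrefix P a n ω ∈ A}, hunion,
    measureReal_biUnion_finset (hdisj _) (hmeas _ MeasurableSet.univ), sum_mul]
  refine sum_congr rfl fun v hv => ?_
  rw [Set.inter_univ, measureReal_chainPrefix_eq_inter_chain_add hP, hA v hv]

theorem measureReal_chain_eq (hP : P ∈ rowStochastic ℝ St) (i : ℕ) (y : St) :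
    μ.real {ω | chain P a i ω = y} = (P ^ i) a y := by
  have h := measureReal_chainPrefix_mem_inter_chain_add hP (a := a) (n := 0) (A := {fun _ => a})
    (z := a) (by simp) i y
  have huniv : {ω | chainPrefix P a 0 ω ∈ ({fun _ => a} : Finset (Fin 1 → St))} = Set.univ := by
    ext ω
    simp [funext_iff, Fin.forall_fin_one, chainPrefix_apply_zero]
  rwa [huniv, Set.univ_inter, zero_add, probReal_univ, one_mul] at h

end Chain

section Hitting

open Matrix

variable {St : Type*} [Fintype St] [DecidableEq St] [Nonempty St] {P : Matrix St St ℝ} {a b : St}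

/-- The event `T_b = j`. -/
def firstVisit (P : Matrix St St ℝ) (a b : St) : ℕ → Set ℝ :=
  disjointed fun i => {ω | chain P a i ω = b}

def firstVisitPaths (b : St) (j : ℕ) : Finset (Fin (j + 1) → St) :=
  {v | v (Fin.last j) = b ∧ ∀ i : Fin j, v i.castSucc ≠ b}

lemma firstVisit_eq_chainPrefix_mem (P : Matrix St St ℝ) (a b : St) (j : ℕ) :
    firstVisit P a b j = {ω | chainPrefix P a j ω ∈ firstVisitPaths b j} := by
  ext ω
  simp [firstVisit, disjointed_eq_inter_compl, firstVisitPaths, chainPrefix, Fin.forall_iff]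

lemma measurableSet_firstVisit (hP : P ∈ rowStochastic ℝ St) (j : ℕ) :
    MeasurableSet (firstVisit P a b j) :=
  MeasurableSet.disjointed (fun i => measurableSet_chain_eq hP i b) j

lemma measureReal_firstVisit_inter_chain_add (hP : P ∈ rowStochastic ℝ St) (j m : ℕ) :
    μ.real (firstVisit P a b j ∩ {ω | chain P a (j + m) ω = b})
      = μ.real (firstVisit P a b j) * (P ^ m) b b := by
  rw [firstVisit_eq_chainPrefix_mem]
  exact measureReal_chainPrefix_mem_inter_chain_add hP (fun v hv => (mem_filter.1 hv).2.1) m b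

theorem pow_apply_eq_sum_firstVisit (hP : P ∈ rowStochastic ℝ St) (i : ℕ) :
    (P ^ i) a b = ∑ j ∈ range (i + 1), μ.real (firstVisit P a b j) * (P ^ (i - j)) b b := by
  have hcover : {ω | chain P a i ω = b}
      = ⋃ j ∈ range (i + 1), firstVisit P a b j ∩ {ω | chain P a i ω = b} := by
    rw [← Set.iUnion₂_inter, firstVisit, biUnion_range_succ_disjointed,
      partialSups_eq_biUnion_range]
    exact (Set.inter_eq_right.2 (subset_set_biUnion_of_mem (f := fun i => {ω | chain P a i ω = b})
      (mem_range.2 (Nat.lt_succ_self i)))).symm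
  rw [← measureReal_chain_eq hP, hcover, measureReal_biUnion_finset]
  · refine sum_congr rfl fun j hj => ?_
    rw [← measureReal_firstVisit_inter_chain_add hP,
      Nat.add_sub_cancel' (Nat.lt_succ_iff.1 (mem_range.1 hj))]
  · exact fun j _ j' _ hne => ((disjoint_disjointed _ hne).mono Set.inter_subset_left
      Set.inter_subset_left)
  · exact fun j _ => (measurableSet_firstVisit hP j).inter (measurableSet_chain_eq hP i b)

theorem measureReal_exists_chain_eq (hP : P ∈ rowStochastic ℝ St) (t : ℕ) :
    μ.real {ω | ∃ i ≤ t, chain P a i ω = b} = ∑ j ∈ range (t + 1), μ.real (firstVisit P a b j) := by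
  have : {ω | ∃ i ≤ t, chain P a i ω = b} = ⋃ j ∈ range (t + 1), firstVisit P a b j := by
    rw [firstVisit, biUnion_range_succ_disjointed, partialSups_eq_biUnion_range]
    ext ω
    simp
  rw [this, measureReal_biUnion_finset (f := firstVisit P a b)
    (fun j _ j' _ hne => disjoint_disjointed _ hne) fun j _ => measurableSet_firstVisit hP j]

end Hitting

section Convolution

variable {h g : ℕ → ℝ}

lemma sum_range_convolution_le_mul (hh : ∀ j, 0 ≤ h j) (hg : ∀ m, 0 ≤ g m) (t : ℕ) :
    ∑ i ∈ range (t + 1), ∑ j ∈ range (i + 1), h j * g (i - j)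
      ≤ (∑ j ∈ range (t + 1), h j) * ∑ m ∈ range (t + 1), g m := by
  rw [sum_range_diag_flip _ fun j m => h j * g m, sum_mul_sum]
  exact sum_le_sum fun j _ => sum_le_sum_of_subset_of_nonneg (range_subset_range.2 (Nat.sub_le _ _))
    fun m _ _ => mul_nonneg (hh j) (hg m)

lemma mul_le_sum_range_convolution (hh : ∀ j, 0 ≤ h j) (hg : ∀ m, 0 ≤ g m) (t s : ℕ) :
    (∑ j ∈ range (t + 1), h j) * ∑ m ∈ range (s + 1), g m
      ≤ ∑ i ∈ range (t + s + 1), ∑ j ∈ range (i + 1), h j * g (i - j) := by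
  rw [sum_range_diag_flip _ fun j m => h j * g m, sum_mul_sum]
  calc ∑ j ∈ range (t + 1), ∑ m ∈ range (s + 1), h j * g m
      ≤ ∑ j ∈ range (t + 1), ∑ m ∈ range (t + s + 1 - j), h j * g m :=
        sum_le_sum fun j hj => sum_le_sum_of_subset_of_nonneg
          (range_subset_range.2 (by have := mem_range.1 hj; omega))
          fun m _ _ => mul_nonneg (hh j) (hg m)
    _ ≤ _ := sum_le_sum_of_subset_of_nonneg (range_subset_range.2 (by omega))
        fun j _ _ => sum_nonneg fun m _ => mul_nonneg (hh j) (hg m)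

end Convolution

/-- **Lemma (hitting probabilities via expected numbers of visits).**  Let `(X_i)` be a
Markov chain on a finite state space with (stochastic) transition matrix `P`, let
`N_t(b)` be the number of visits to `b` up to time `t` and `T_b` the hitting time of `b`.
Then for all states `a, b` and all `t, s`:
`E_a[N_t(b)]/E_b[N_t(b)] ≤ Pr_a[T_b ≤ t] ≤ E_a[N_{t+s}(b)]/E_b[N_s(b)]`, i.e.
`(∑_{i=0}^t P^i(a,b))/(∑_{i=0}^t P^i(b,b)) ≤ Pr_a[T_b ≤ t]
  ≤ (∑_{i=0}^{t+s} P^i(a,b))/(∑_{i=0}^s P^i(b,b))`. -/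
theorem mc_hitting (St : Type) [Fintype St] [DecidableEq St] [Nonempty St]
    (P : Matrix St St ℝ) (hnonneg : ∀ x y, 0 ≤ P x y) (hstoch : ∀ x, ∑ y, P x y = 1)
    (a b : St) (t s : ℕ) :
    (∑ i ∈ Finset.range (t + 1), (P ^ i) a b) / (∑ i ∈ Finset.range (t + 1), (P ^ i) b b)
      ≤ (μ {ω | ∃ i ≤ t,
          walkFrom (mcStep (fun x y => P x y)) (fun k => unif k ω) a i = b}).toReal ∧
    (μ {ω | ∃ i ≤ t,
        walkFrom (mcStep (fun x y => P x y)) (fun k => unif k ω) a i = b}).toReal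
      ≤ (∑ i ∈ Finset.range (t + s + 1), (P ^ i) a b) /
          (∑ i ∈ Finset.range (s + 1), (P ^ i) b b) := by
  have hP : P ∈ Matrix.rowStochastic ℝ St := Matrix.mem_rowStochastic_iff_sum.2 ⟨hnonneg, hstoch⟩
  have hhit : (μ {ω | ∃ i ≤ t,
      walkFrom (mcStep (fun x y => P x y)) (fun k => unif k ω) a i = b}).toReal
      = ∑ j ∈ range (t + 1), μ.real (firstVisit P a b j) := measureReal_exists_chain_eq hP t
  have hvisits : ∀ r, ∑ i ∈ range (r + 1), (P ^ i) a b = ∑ i ∈ range (r + 1),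
      ∑ j ∈ range (i + 1), μ.real (firstVisit P a b j) * (P ^ (i - j)) b b :=
    fun r => sum_congr rfl fun i _ => pow_apply_eq_sum_firstVisit hP i
  have hg : ∀ m, 0 ≤ (P ^ m) b b := fun m => Matrix.nonneg_of_mem_rowStochastic (pow_mem hP m)
  have hreturns : ∀ r, 0 < ∑ m ∈ range (r + 1), (P ^ m) b b := fun r =>
    one_pos.trans_le (by simpa using single_le_sum (fun m _ => hg m) (mem_range.2 r.succ_pos))
  rw [hhit, hvisits, hvisits, div_le_iff₀ (hreturns t), le_div_iff₀ (hreturns s)]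
  exact ⟨sum_range_convolution_le_mul (fun _ => measureReal_nonneg) hg t,
    mul_le_sum_range_convolution (fun _ => measureReal_nonneg) hg t s⟩

end FrogWork
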